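/- Let c ∈ ℝ, let b ∈ L¹(I⁺) with b ≥ 0 a.e. on a compact interval I⁺ = [σ,τ], let g : [0,1] → ℝ be continuous with (g*), let λ > 0, θ ∈ (0,1], r ∈ (0,1), and suppose λ‖b‖_{L¹(I⁺)} ζ(r) e^{|c||I⁺|} |I⁺| < 1/2, where ζ(r) := max_{r/2 ≤ u ≤ r} g(u)/u and |I⁺| = τ−σ. If u is a non-negative solution of u'' + cu' + θλb(x)g(u) = 0 on I⁺ with max_{x∈I⁺} u(x) = r and u'(σ) ≥ 0, then u'(τ) ≥ −θλ‖b‖_{L¹(I⁺)} ζ(r) r e^{|c||I⁺|} and u(τ) ≥ r(1 − θλ‖b‖_{L¹(I⁺)} ζ(r) e^{|c||I⁺|}|I⁺|). -/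

import Mathlib

open MeasureTheory Set Filter Topology

noncomputable section

/-- Carathéodory solution of `u'' + c u' + h(x, u(x)) = 0` on `J`:
`u` is C¹ on `J` with derivative `u'`, which is (locally) absolutely continuous with
a.e.-derivative `u''`, and the equation holds a.e. on `J`. -/
def CaraSol (c : ℝ) (h : ℝ → ℝ → ℝ) (u u' : ℝ → ℝ) (J : Set ℝ) : Prop :=
  (∀ x ∈ J, HasDerivWithinAt u (u' x) J x) ∧
  ContinuousOn u' J ∧
  ∃ u'' : ℝ → ℝ,
    (∀ x ∈ J, ∀ y ∈ J, u' y - u' x = ∫ t in x..y, u'' t) ∧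
    (∀ᵐ x ∂(volume.restrict J), u'' x + c * u' x + h x (u x) = 0)

/-- positive part `a⁺` of a weight -/
def pospart (a : ℝ → ℝ) : ℝ → ℝ := fun x => max (a x) 0

/-- negative part `a⁻` of a weight -/
def negpart (a : ℝ → ℝ) : ℝ → ℝ := fun x => max (-a x) 0

/-- the two-parameter weight `a_{λ,μ} = λ a⁺ - μ a⁻` -/
def awt (a : ℝ → ℝ) (lam mu : ℝ) : ℝ → ℝ := fun x => lam * pospart a x - mu * negpart a x

/-- the critical ratio `μ#(λ) = λ ∫₀^P a⁺ / ∫₀^P a⁻` -/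
def muSharp (a : ℝ → ℝ) (P lam : ℝ) : ℝ :=
  lam * (∫ x in (0:ℝ)..P, pospart a x) / (∫ x in (0:ℝ)..P, negpart a x)

/-- A `P`-periodic locally integrable weight satisfying `(a*)`, with `m` positivity
intervals `I⁺ᵢ = [σ i, τ i]` separated by negativity intervals `I⁻ᵢ = [τ i, σ (i+1)]`. -/
structure AStar (P : ℝ) (m : ℕ) (a : ℝ → ℝ) (σ τ : ℕ → ℝ) : Prop where
  hP : 0 < P
  hm : 1 ≤ m
  periodic : ∀ x, a (x + P) = a x
  locint : LocallyIntegrable a volume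
  σ_one : σ 1 = 0
  σ_last : σ (m + 1) = P
  lt_στ : ∀ i ∈ Finset.Icc 1 m, σ i < τ i
  lt_τσ : ∀ i ∈ Finset.Icc 1 m, τ i < σ (i + 1)
  pos_ae : ∀ i ∈ Finset.Icc 1 m, ∀ᵐ x ∂(volume.restrict (Icc (σ i) (τ i))), 0 ≤ a x
  pos_ne : ∀ i ∈ Finset.Icc 1 m, ¬ (∀ᵐ x ∂(volume.restrict (Icc (σ i) (τ i))), a x = 0)
  neg_ae : ∀ i ∈ Finset.Icc 1 m, ∀ᵐ x ∂(volume.restrict (Icc (τ i) (σ (i + 1)))), a x ≤ 0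
  neg_ne : ∀ i ∈ Finset.Icc 1 m, ¬ (∀ᵐ x ∂(volume.restrict (Icc (τ i) (σ (i + 1)))), a x = 0)

/-- condition `(g*)` -/
def Gstar (g : ℝ → ℝ) : Prop := g 0 = 0 ∧ g 1 = 0 ∧ ∀ u ∈ Ioo (0:ℝ) 1, 0 < g u

/-- condition `(g₀)`: `g(u)/u → 0` as `u → 0⁺` -/
def Gzero (g : ℝ → ℝ) : Prop := Tendsto (fun u => g u / u) (𝓝[>] (0:ℝ)) (𝓝 0)

/-- condition `(g₁)`: `limsup_{u→1⁻} g(u)/(1-u) < ∞` -/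
def Gone (g : ℝ → ℝ) : Prop := ∃ K : ℝ, ∀ᶠ u in 𝓝[<] (1:ℝ), g u / (1 - u) ≤ K

/-- `P`-periodic Carathéodory solution of `u'' + c u' + w(x) g(u) = 0` on `ℝ`. -/
def PerSol (c : ℝ) (w g u u' : ℝ → ℝ) (P : ℝ) : Prop :=
  CaraSol c (fun x v => w x * g v) u u' univ ∧ ∀ x, u (x + P) = u x

/-!
Multiplying the equation by the integrating factor `e^{cx}` gives
`(e^{cx} u')' = -θ λ e^{cx} b(x) g(u)`. Start at a point `x₀` where `u` attains its maximum `r`,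
so that `u'(x₀) ≥ 0`. As long as `u ≥ r/2` on `[x₀, z]`, we have `g(u) ≤ ζ(r) u ≤ ζ(r) r` there, and
integrating from `x₀` to `z` gives `u'(z) ≥ -K` with `K = θ λ ‖b‖₁ ζ(r) r e^{|c||I⁺|}`; hence
`u(z) ≥ r - K |I⁺| > r/2` by the smallness assumption. A continuity argument therefore keeps `u`
above `r/2` on all of `[x₀, τ]`, and both bounds hold at `z = τ`.
-/

open Real

theorem exp_mul_sub_exp_mul_eq_integral {f f'' : ℝ → ℝ} {a b : ℝ} (c : ℝ)
    (hf'' : IntervalIntegrable f'' volume a b)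
    (hf : ∀ y ∈ uIcc a b, f y - f a = ∫ t in a..y, f'' t) :
    exp (c * b) * f b - exp (c * a) * f a = ∫ s in a..b, exp (c * s) * (f'' s + c * f s) := by
  set F : ℝ → ℝ := fun y => f a + ∫ t in a..y, f'' t
  have hFf : ∀ y ∈ uIcc a b, F y = f y := fun y hy => by simp only [F, ← hf y hy]; ring
  have hE : AbsolutelyContinuousOnInterval (fun s => exp (c * s)) a b :=
    ContDiffOn.absolutelyContinuousOnInterval (by fun_prop)
  have hF : AbsolutelyContinuousOnInterval F a b :=
    (ContDiffOn.absolutelyContinuousOnInterval contDiffOn_const).add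
      (hf''.absolutelyContinuousOnInterval_intervalIntegral left_mem_uIcc)
  rw [← hFf b right_mem_uIcc, ← hFf a left_mem_uIcc, ← hE.integral_deriv_mul_eq_sub hF]
  refine intervalIntegral.integral_congr_ae ?_
  filter_upwards [hf''.ae_hasDerivAt_integral] with s hderiv hs
  have hs' : s ∈ uIcc a b := uIoc_subset_uIcc hs
  have hE' : deriv (fun s => exp (c * s)) s = c * exp (c * s) := by
    simpa [mul_comm] using ((hasDerivAt_id s).const_mul c).exp.deriv
  rw [hE', ((hderiv hs' a left_mem_uIcc).const_add (f a)).deriv, hFf s hs']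
  ring

theorem exp_mul_le_exp_mul_mul_exp {c σ τ s z : ℝ} (hs : s ∈ Icc σ τ) (hz : z ∈ Icc σ τ) :
    exp (c * s) ≤ exp (c * z) * exp (|c| * (τ - σ)) := by
  rw [← exp_add, exp_le_exp]
  have hsz : |s - z| ≤ τ - σ := abs_sub_le_iff.2 ⟨by linarith [hs.2, hz.1], by linarith [hs.1, hz.2]⟩
  calc c * s = c * z + c * (s - z) := by ring
    _ ≤ c * z + |c| * |s - z| := by rw [← abs_mul]; linarith [le_abs_self (c * (s - z))]
    _ ≤ c * z + |c| * (τ - σ) := by gcongr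

theorem ContinuousOn.forall_lt_of_forall_Ico {f : ℝ → ℝ} {a b m : ℝ}
    (hf : ContinuousOn f (Icc a b))
    (hstep : ∀ z ∈ Icc a b, (∀ t ∈ Ico a z, m ≤ f t) → m < f z) :
    ∀ z ∈ Icc a b, m < f z := by
  by_contra! ⟨z, hz, hfz⟩
  set A := Icc a b ∩ f ⁻¹' Iic m
  have hbdd : BddBelow A := ⟨a, fun t ht => ht.1.1⟩
  have hmin : sInf A ∈ A :=
    (hf.preimage_isClosed_of_isClosed isClosed_Icc isClosed_Iic).csInf_mem ⟨z, hz, hfz⟩ hbdd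
  refine (hstep _ hmin.1 fun t ht => ?_).not_ge hmin.2
  by_contra! hlt
  exact ht.2.not_ge (csInf_le hbdd ⟨⟨ht.1, ht.2.le.trans hmin.1.2⟩, hlt.le⟩)

theorem le_sSup_image_div_mul {g : ℝ → ℝ} {a b v : ℝ} (hg : ContinuousOn g (Icc a b))
    (ha : 0 < a) (hv : v ∈ Icc a b) : g v ≤ sSup ((fun v => g v / v) '' Icc a b) * v := by
  have hcont : ContinuousOn (fun v => g v / v) (Icc a b) :=
    hg.div continuousOn_id fun v hv => (ha.trans_le hv.1).ne'
  rw [← div_le_iff₀ (ha.trans_le hv.1)]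
  exact le_csSup (isCompact_Icc.image_of_continuousOn hcont).bddAbove (mem_image_of_mem _ hv)

theorem Gstar.nonneg {g : ℝ → ℝ} (hg : Gstar g) {v : ℝ} (hv : v ∈ Icc (0 : ℝ) 1) : 0 ≤ g v := by
  obtain ⟨hg0, hg1, hpos⟩ := hg
  rcases hv.1.eq_or_lt with rfl | h0
  · exact hg0.ge
  rcases hv.2.eq_or_lt with rfl | h1
  · exact hg1.ge
  exact (hpos v ⟨h0, h1⟩).le

namespace CaraSol

variable {c σ τ : ℝ} {h : ℝ → ℝ → ℝ} {u u' : ℝ → ℝ}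

theorem continuousOn {J : Set ℝ} (hsol : CaraSol c h u u' J) : ContinuousOn u J :=
  fun x hx => (hsol.1 x hx).continuousWithinAt

theorem hasDerivAt (hsol : CaraSol c h u u' (Icc σ τ)) {x : ℝ} (hx : x ∈ Ioo σ τ) :
    HasDerivAt u (u' x) x :=
  (hsol.1 x (Ioo_subset_Icc_self hx)).hasDerivAt (Icc_mem_nhds hx.1 hx.2)

theorem exp_mul_deriv_sub (hsol : CaraSol c h u u' (Icc σ τ))
    (hH : IntegrableOn (fun s => h s (u s)) (Icc σ τ)) {x z : ℝ} (hx : x ∈ Icc σ τ)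
    (hz : z ∈ Icc σ τ) :
    exp (c * z) * u' z - exp (c * x) * u' x = -∫ s in x..z, exp (c * s) * h s (u s) := by
  obtain ⟨-, hu', u'', hu'', hode⟩ := hsol
  have hsub : uIcc x z ⊆ Icc σ τ := uIcc_subset_Icc hx hz
  have hode' : u'' =ᵐ[volume.restrict (uIoc x z)] fun s => -(c * u' s + h s (u s)) := by
    filter_upwards [ae_restrict_of_ae_restrict_of_subset (uIoc_subset_uIcc.trans hsub) hode]
      with s hs
    linarith
  have hint : IntervalIntegrable u'' volume x z :=
    ((hu'.mono hsub).intervalIntegrable.const_mul c |>.add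
      ((hH.mono_set hsub).intervalIntegrable)).neg.congr_ae hode'.symm
  rw [exp_mul_sub_exp_mul_eq_integral c hint fun y hy => hu'' x hx y (hsub hy),
    ← intervalIntegral.integral_neg]
  refine intervalIntegral.integral_congr_ae ?_
  rw [← ae_restrict_iff' measurableSet_uIoc]
  filter_upwards [hode'] with s hs
  rw [hs]
  ring

theorem neg_le_deriv {w g : ℝ → ℝ}
    (hsol : CaraSol c (fun x v => w x * g v) u u' (Icc σ τ))
    (hw : IntegrableOn w (Icc σ τ)) (hw0 : ∀ᵐ s ∂volume.restrict (Icc σ τ), 0 ≤ w s)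
    (hgu : ContinuousOn (fun s => g (u s)) (Icc σ τ)) (hgu0 : ∀ s ∈ Icc σ τ, 0 ≤ g (u s))
    {x z C : ℝ} (hx : x ∈ Icc σ τ) (hz : z ∈ Icc σ τ) (hxz : x ≤ z) (hu'x : 0 ≤ u' x)
    (hC0 : 0 ≤ C) (hC : ∀ s ∈ Ico x z, g (u s) ≤ C) :
    -(C * exp (|c| * (τ - σ)) * ∫ s in Icc σ τ, w s) ≤ u' z := by
  set E := exp (|c| * (τ - σ))
  have hsub : Icc x z ⊆ Icc σ τ := Icc_subset_Icc hx.1 hz.2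
  have hsub' : uIcc x z ⊆ Icc σ τ := uIcc_subset_Icc hx hz
  have hH : IntegrableOn (fun s => w s * g (u s)) (Icc σ τ) := hw.mul_continuousOn hgu isCompact_Icc
  have hpt : ∀ᵐ s ∂volume.restrict (Icc x z),
      exp (c * s) * (w s * g (u s)) ≤ exp (c * z) * E * C * w s := by
    filter_upwards [ae_restrict_of_ae_restrict_of_subset hsub hw0, ae_restrict_mem measurableSet_Icc,
      ae_restrict_of_ae (Measure.ae_ne volume z)] with s hws hs hsz
    calc exp (c * s) * (w s * g (u s)) ≤ (exp (c * z) * E) * (w s * C) :=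
          mul_le_mul (exp_mul_le_exp_mul_mul_exp (hsub hs) hz)
            (mul_le_mul_of_nonneg_left (hC s ⟨hs.1, lt_of_le_of_ne hs.2 hsz⟩) hws)
            (mul_nonneg hws (hgu0 s (hsub hs))) (by positivity)
      _ = exp (c * z) * E * C * w s := by ring
  have hwxz : ∫ s in x..z, w s ≤ ∫ s in Icc σ τ, w s := by
    rw [intervalIntegral.integral_of_le hxz]
    exact setIntegral_mono_set hw hw0 (Ioc_subset_Icc_self.trans hsub).eventuallyLE
  have hint : ∫ s in x..z, exp (c * s) * (w s * g (u s)) ≤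
      exp (c * z) * (C * E * ∫ s in Icc σ τ, w s) :=
    calc ∫ s in x..z, exp (c * s) * (w s * g (u s))
        ≤ ∫ s in x..z, exp (c * z) * E * C * w s :=
          intervalIntegral.integral_mono_ae_restrict hxz
            ((hH.mono_set hsub').intervalIntegrable |>.continuousOn_mul (by fun_prop))
            ((hw.mono_set hsub').intervalIntegrable |>.const_mul _) hpt
      _ = exp (c * z) * E * C * ∫ s in x..z, w s := intervalIntegral.integral_const_mul _ _
      _ ≤ exp (c * z) * E * C * ∫ s in Icc σ τ, w s := by gcongr
      _ = exp (c * z) * (C * E * ∫ s in Icc σ τ, w s) := by ring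
  have hid := hsol.exp_mul_deriv_sub hH hx hz
  have hux : 0 ≤ exp (c * x) * u' x := mul_nonneg (exp_pos _).le hu'x
  refine le_of_mul_le_mul_left ?_ (exp_pos (c * z))
  linarith

theorem mul_sub_le_sub (hsol : CaraSol c h u u' (Icc σ τ)) {x z K : ℝ}
    (hx : x ∈ Icc σ τ) (hz : z ∈ Icc σ τ) (hxz : x ≤ z) (hK : ∀ s ∈ Ioo x z, K ≤ u' s) :
    K * (z - x) ≤ u z - u x := by
  have hsub : Icc x z ⊆ Icc σ τ := Icc_subset_Icc hx.1 hz.2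
  have hderiv : ∀ s ∈ Ioo x z, HasDerivAt u (u' s) s := fun s hs =>
    hsol.hasDerivAt ⟨hx.1.trans_lt hs.1, hs.2.trans_le hz.2⟩
  refine (convex_Icc x z).mul_sub_le_image_sub_of_le_deriv (hsol.continuousOn.mono hsub) ?_ ?_
    x (left_mem_Icc.2 hxz) z (right_mem_Icc.2 hxz) hxz
  · rw [interior_Icc]
    exact fun s hs => (hderiv s hs).differentiableAt.differentiableWithinAt
  · rw [interior_Icc]
    exact fun s hs => (hderiv s hs).deriv ▸ hK s hs

theorem deriv_nonneg_of_isMaxOn (hsol : CaraSol c h u u' (Icc σ τ)) {x : ℝ}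
    (hx : x ∈ Ioc σ τ) (hmax : IsMaxOn u (Icc σ τ) x) : 0 ≤ u' x := by
  have hx' : x ∈ Icc σ τ := Ioc_subset_Icc_self hx
  have := hmax.localize.hasFDerivWithinAt_nonpos (hsol.1 x hx').hasFDerivWithinAt
    (sub_mem_posTangentConeAt_of_segment_subset
      ((convex_Icc σ τ).segment_subset hx' (left_mem_Icc.2 (hx.1.le.trans hx.2))))
  simp only [ContinuousLinearMap.toSpanSingleton_apply, smul_eq_mul] at this
  exact nonneg_of_mul_nonpos_right this (sub_neg.2 hx.1)

theorem exists_isMaxOn_deriv_nonneg (hsol : CaraSol c h u u' (Icc σ τ)) (hστ : σ ≤ τ)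
    (hder : 0 ≤ u' σ) :
    ∃ x₀ ∈ Icc σ τ, u x₀ = sSup (u '' Icc σ τ) ∧ IsMaxOn u (Icc σ τ) x₀ ∧ 0 ≤ u' x₀ := by
  have hcpt := isCompact_Icc.image_of_continuousOn hsol.continuousOn
  obtain ⟨x₀, hx₀, hux₀⟩ := hcpt.sSup_mem ((nonempty_Icc.2 hστ).image u)
  have hmax : IsMaxOn u (Icc σ τ) x₀ := fun x hx =>
    hux₀ ▸ le_csSup hcpt.bddAbove (mem_image_of_mem u hx)
  refine ⟨x₀, hx₀, hux₀, hmax, ?_⟩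
  rcases hx₀.1.eq_or_lt with rfl | hσx₀
  · exact hder
  · exact hsol.deriv_nonneg_of_isMaxOn ⟨hσx₀, hx₀.2⟩ hmax

theorem lower_bounds_of_small {w g : ℝ → ℝ}
    (hsol : CaraSol c (fun x v => w x * g v) u u' (Icc σ τ))
    (hw : IntegrableOn w (Icc σ τ)) (hw0 : ∀ᵐ s ∂volume.restrict (Icc σ τ), 0 ≤ w s)
    (hgu : ContinuousOn (fun s => g (u s)) (Icc σ τ)) (hgu0 : ∀ s ∈ Icc σ τ, 0 ≤ g (u s))
    {x₀ r C : ℝ} (hx₀ : x₀ ∈ Icc σ τ) (hux₀ : u x₀ = r) (hu'x₀ : 0 ≤ u' x₀) (hC0 : 0 ≤ C)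
    (hC : ∀ s ∈ Icc σ τ, r / 2 ≤ u s → g (u s) ≤ C)
    (hsmall : C * exp (|c| * (τ - σ)) * (∫ s in Icc σ τ, w s) * (τ - σ) < r / 2) :
    -(C * exp (|c| * (τ - σ)) * ∫ s in Icc σ τ, w s) ≤ u' τ ∧
      r - C * exp (|c| * (τ - σ)) * (∫ s in Icc σ τ, w s) * (τ - σ) ≤ u τ := by
  set K := C * exp (|c| * (τ - σ)) * ∫ s in Icc σ τ, w s
  have hK0 : 0 ≤ K := mul_nonneg (by positivity) (integral_nonneg_of_ae hw0)
  have hderiv : ∀ z ∈ Icc x₀ τ, (∀ t ∈ Ico x₀ z, r / 2 ≤ u t) → -K ≤ u' z :=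
    fun z hz hhalf => hsol.neg_le_deriv hw hw0 hgu hgu0 hx₀ ⟨hx₀.1.trans hz.1, hz.2⟩ hz.1 hu'x₀
      hC0 fun s hs => hC s ⟨hx₀.1.trans hs.1, hs.2.le.trans hz.2⟩ (hhalf s hs)
  have hvalue : ∀ z ∈ Icc x₀ τ, (∀ t ∈ Ico x₀ z, r / 2 ≤ u t) → r - K * (τ - σ) ≤ u z := by
    intro z hz hhalf
    have := hsol.mul_sub_le_sub hx₀ ⟨hx₀.1.trans hz.1, hz.2⟩ hz.1 fun s hs =>
      hderiv s ⟨hs.1.le, hs.2.le.trans hz.2⟩ fun t ht => hhalf t ⟨ht.1, ht.2.trans hs.2⟩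
    nlinarith [hz.2, hx₀.1]
  have hhalf : ∀ z ∈ Icc x₀ τ, r / 2 < u z :=
    (hsol.continuousOn.mono (Icc_subset_Icc_left hx₀.1)).forall_lt_of_forall_Ico
      fun z hz hhalf => by linarith [hvalue z hz hhalf]
  have hτ : τ ∈ Icc x₀ τ := ⟨hx₀.2, le_rfl⟩
  have hhalfτ : ∀ t ∈ Ico x₀ τ, r / 2 ≤ u t := fun t ht => (hhalf t (Ico_subset_Icc_self ht)).le
  exact ⟨hderiv τ hτ hhalfτ, hvalue τ hτ hhalfτ⟩

end CaraSol

/-- Step 1 of Lemma 2.5: the estimates (eq-4.2tau), (eq-4.3tau) on a positivity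
interval `I⁺ = [σ,τ]`, with `ζ(r) = max_{r/2 ≤ v ≤ r} g(v)/v`. -/
theorem statement10 (c σ τ lam θ r : ℝ) (hστ : σ < τ) (b : ℝ → ℝ)
    (hb : IntegrableOn b (Icc σ τ))
    (hbnn : ∀ᵐ x ∂(volume.restrict (Icc σ τ)), 0 ≤ b x)
    (g : ℝ → ℝ) (hg : ContinuousOn g (Icc 0 1)) (hgs : Gstar g)
    (hlam : 0 < lam) (hθ : θ ∈ Ioc (0:ℝ) 1) (hr : r ∈ Ioo (0:ℝ) 1)
    (hsmall : lam * (∫ x in Icc σ τ, |b x|) *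
        sSup ((fun v => g v / v) '' Icc (r / 2) r) *
        Real.exp (|c| * (τ - σ)) * (τ - σ) < 1 / 2)
    (u u' : ℝ → ℝ)
    (hsol : CaraSol c (fun x v => θ * lam * b x * g v) u u' (Icc σ τ))
    (hnn : ∀ x ∈ Icc σ τ, 0 ≤ u x)
    (hmax : sSup (u '' Icc σ τ) = r)
    (hder : 0 ≤ u' σ) :
    u' τ ≥ -(θ * lam * (∫ x in Icc σ τ, |b x|) *
        sSup ((fun v => g v / v) '' Icc (r / 2) r) * r * Real.exp (|c| * (τ - σ))) ∧
    u τ ≥ r * (1 - θ * lam * (∫ x in Icc σ τ, |b x|) *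
        sSup ((fun v => g v / v) '' Icc (r / 2) r) *
        Real.exp (|c| * (τ - σ)) * (τ - σ)) := by
  obtain ⟨hθ0, hθ1⟩ := hθ
  obtain ⟨hr0, hr1⟩ := hr
  set ζ := sSup ((fun v => g v / v) '' Icc (r / 2) r)
  set B := ∫ x in Icc σ τ, |b x|
  have hζ : ∀ v ∈ Icc (r / 2) r, g v ≤ ζ * v := fun v hv =>
    le_sSup_image_div_mul (hg.mono (Icc_subset_Icc (by positivity) hr1.le)) (by positivity) hv
  have hζ0 : 0 ≤ ζ := nonneg_of_mul_nonneg_left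
    ((hgs.nonneg ⟨hr0.le, hr1.le⟩).trans (hζ r ⟨by linarith, le_rfl⟩)) hr0
  obtain ⟨x₀, hx₀, hux₀, hmaxOn, hu'x₀⟩ := hsol.exists_isMaxOn_deriv_nonneg hστ.le hder
  rw [hmax] at hux₀
  have hle_r : ∀ x ∈ Icc σ τ, u x ≤ r := fun x hx => hux₀ ▸ hmaxOn hx
  have hu01 : MapsTo u (Icc σ τ) (Icc 0 1) := fun x hx => ⟨hnn x hx, (hle_r x hx).trans hr1.le⟩
  have hwB : ∫ x in Icc σ τ, θ * lam * b x = θ * lam * B := by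
    rw [integral_const_mul]
    congr 1
    refine integral_congr_ae ?_
    filter_upwards [hbnn] with x hx
    exact (abs_of_nonneg hx).symm
  have hsmall' : ζ * r * Real.exp (|c| * (τ - σ)) * (θ * lam * B) * (τ - σ) < r / 2 :=
    calc _ = θ * r * (lam * B * ζ * Real.exp (|c| * (τ - σ)) * (τ - σ)) := by ring
      _ ≤ 1 * r * (lam * B * ζ * Real.exp (|c| * (τ - σ)) * (τ - σ)) := by
        have := hστ.le
        gcongr
      _ < r / 2 := by nlinarith
  have hsol' : CaraSol c (fun x v => (θ * lam * b x) * g v) u u' (Icc σ τ) := hsol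
  obtain ⟨hu'τ, huτ⟩ := hsol'.lower_bounds_of_small (hb.const_mul (θ * lam))
    (by filter_upwards [hbnn] with x hx; positivity) (hg.comp hsol.continuousOn hu01)
    (fun x hx => hgs.nonneg (hu01 hx)) hx₀ hux₀ hu'x₀ (by positivity)
    (fun x hx hx2 => (hζ (u x) ⟨hx2, hle_r x hx⟩).trans (by gcongr; exact hle_r x hx))
    (hwB ▸ hsmall')
  rw [hwB] at hu'τ huτ
  constructor <;> linarith

end
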